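/- The operators L_1 and L_2 act on the basis of 𝔄_{1,1} as follows (identities in ℂ(x,y)): for all i, j ∈ ℤ with 2i+j ≠ 1, L_1 φ_{ij} = (i+j) φ_{ij} and L_2 φ_{ij} = (i(i−1) − (1/2) j(j+1)) φ_{ij}; and for all i ∈ ℤ, L_1 ψ_i = −i ψ_i and L_2 ψ_i = −i² ψ_i − φ_i. -/

import Mathlib

set_option synthInstance.maxHeartbeats 400000
set_option maxHeartbeats 1000000

noncomputable section
open scoped BigOperators

/-- The field of rational functions `ℂ(x, y)`. -/
def Fld2 : Type := FractionRing (MvPolynomial (Fin 2) ℂ)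

instance : Field Fld2 :=
  inferInstanceAs (Field (FractionRing (MvPolynomial (Fin 2) ℂ)))
instance : Algebra ℂ Fld2 :=
  inferInstanceAs (Algebra ℂ (FractionRing (MvPolynomial (Fin 2) ℂ)))
instance : Algebra (MvPolynomial (Fin 2) ℂ) Fld2 :=
  inferInstanceAs (Algebra (MvPolynomial (Fin 2) ℂ) (FractionRing (MvPolynomial (Fin 2) ℂ)))

/-- The variable `x`. -/
def XX : Fld2 := algebraMap (MvPolynomial (Fin 2) ℂ) Fld2 (MvPolynomial.X 0)

/-- The variable `y`. -/
def YY : Fld2 := algebraMap (MvPolynomial (Fin 2) ℂ) Fld2 (MvPolynomial.X 1)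

abbrev EndF2 : Type := Fld2 →ₗ[ℂ] Fld2

/-- Multiplication by a rational function, as a `ℂ`-linear operator. -/
def mulOp2 (a : Fld2) : EndF2 := LinearMap.mulLeft ℂ a

/-- `(Dx, Dy)` is the pair of Euler derivations `(x ∂/∂x, y ∂/∂y)` of `ℂ(x,y)`: `ℂ`-linear,
satisfying the Leibniz rule, with the prescribed values on the variables (these properties
determine them uniquely). -/
def IsEulerPair (Dx Dy : EndF2) : Prop :=
  (∀ f g : Fld2, Dx (f * g) = f * Dx g + Dx f * g) ∧
  (∀ f g : Fld2, Dy (f * g) = f * Dy g + Dy f * g) ∧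
  Dx XX = XX ∧ Dx YY = 0 ∧ Dy YY = YY ∧ Dy XX = 0

/-- The operator `L_1 = ∂_x + ∂_y`. -/
def L1op (Dx Dy : EndF2) : EndF2 := Dx + Dy

/-- The operator `L_2 = ∂_x² − (1/2)∂_y² − ((x+y)/(x−y))(∂_x + (1/2)∂_y)`. -/
def L2op (Dx Dy : EndF2) : EndF2 :=
  Dx ∘ₗ Dx - (2⁻¹ : ℂ) • (Dy ∘ₗ Dy : EndF2)
    - (mulOp2 ((XX + YY) / (XX - YY)) ∘ₗ (Dx + (2⁻¹ : ℂ) • Dy) : EndF2)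

/-- The operator
`L_3 = ∂_x³ + (1/4)∂_y³ − (3/2)((x+y)/(x−y))(∂_x² − (1/4)∂_y²)
        + (3/4)((x²+4xy+y²)/(x−y)²)(∂_x + (1/2)∂_y)`. -/
def L3op (Dx Dy : EndF2) : EndF2 :=
  Dx ∘ₗ Dx ∘ₗ Dx + (4⁻¹ : ℂ) • (Dy ∘ₗ Dy ∘ₗ Dy : EndF2)
    - (3 / 2 : ℂ) •
        (mulOp2 ((XX + YY) / (XX - YY)) ∘ₗ
          (Dx ∘ₗ Dx - (4⁻¹ : ℂ) • (Dy ∘ₗ Dy : EndF2)) : EndF2)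
    + (3 / 4 : ℂ) •
        (mulOp2 ((XX ^ 2 + 4 * XX * YY + YY ^ 2) / (XX - YY) ^ 2) ∘ₗ
          (Dx + (2⁻¹ : ℂ) • Dy) : EndF2)

/-- `φ_{ij} = x^i y^j − ((2i+j)/(2i+j−1)) x^{i−1} y^{j+1}` as an element of `ℂ(x,y)`. -/
def phiF (i j : ℤ) : Fld2 :=
  XX ^ i * YY ^ j - (((2*i + j : ℤ) : ℂ) / ((2*i + j - 1 : ℤ) : ℂ)) • (XX ^ (i-1) * YY ^ (j+1))

/-- `φ_i = x^i y^{−2i}` as an element of `ℂ(x,y)`. -/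
def phi0F (i : ℤ) : Fld2 := XX ^ i * YY ^ (-2*i)

/-- `ψ_i = x^{i+1} y^{−1−2i} + x^{i−1} y^{1−2i}` as an element of `ℂ(x,y)`. -/
def psiF (i : ℤ) : Fld2 :=
  XX ^ (i+1) * YY ^ (-1-2*i) + XX ^ (i-1) * YY ^ (1-2*i)

instance : IsFractionRing (MvPolynomial (Fin 2) ℂ) Fld2 :=
  inferInstanceAs (IsFractionRing (MvPolynomial (Fin 2) ℂ) (FractionRing (MvPolynomial (Fin 2) ℂ)))

lemma XX_ne : XX ≠ 0 := by
  have : Function.Injective (algebraMap (MvPolynomial (Fin 2) ℂ) Fld2) :=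
    IsFractionRing.injective _ _
  simp only [XX, Ne, map_eq_zero_iff _ this]
  exact MvPolynomial.X_ne_zero 0

lemma YY_ne : YY ≠ 0 := by
  have : Function.Injective (algebraMap (MvPolynomial (Fin 2) ℂ) Fld2) :=
    IsFractionRing.injective _ _
  simp only [YY, Ne, map_eq_zero_iff _ this]
  exact MvPolynomial.X_ne_zero 1

lemma XY_ne : XX - YY ≠ 0 := by
  have hinj : Function.Injective (algebraMap (MvPolynomial (Fin 2) ℂ) Fld2) :=
    IsFractionRing.injective _ _
  have h2 : XX - YY = algebraMap (MvPolynomial (Fin 2) ℂ) Fld2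
      (MvPolynomial.X 0 - MvPolynomial.X 1) := by
    rw [map_sub]; rfl
  rw [h2, Ne, map_eq_zero_iff _ hinj]
  intro h
  have := congrArg (MvPolynomial.eval (fun k : Fin 2 => if k = 0 then (1:ℂ) else 0)) h
  simp at this

lemma D_one (D : EndF2) (h : ∀ f g : Fld2, D (f * g) = f * D g + D f * g) : D 1 = 0 := by
  have h1 := h 1 1
  simp only [mul_one, one_mul] at h1
  exact right_eq_add.mp h1

lemma D_zpow (D : EndF2) (h : ∀ f g : Fld2, D (f * g) = f * D g + D f * g)
    (u : Fld2) (hu : u ≠ 0) (c : ℂ) (hc : D u = c • u) :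
    ∀ n : ℤ, D (u ^ n) = ((n : ℂ) * c) • u ^ n := by
  have hnat : ∀ n : ℕ, D (u ^ n) = ((n : ℂ) * c) • u ^ n := by
    intro n; induction n with
    | zero => simp [D_one D h]
    | succ n ih =>
      rw [pow_succ, h, ih, hc, mul_smul_comm, smul_mul_assoc, ← add_smul]
      congr 1
      push_cast; ring
  intro n
  rcases n with m | m
  · simpa using hnat m
  · have hw : (u ^ (m+1) : Fld2) ≠ 0 := pow_ne_zero _ hu
    have h1 := h (u ^ (m+1)) ((u ^ (m+1))⁻¹)
    rw [mul_inv_cancel₀ hw, D_one D h, hnat (m+1)] at h1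
    rw [smul_mul_assoc, mul_inv_cancel₀ hw] at h1
    have key : u ^ (m+1) * D ((u ^ (m+1))⁻¹) = -((((m:ℂ)+1) * c) • (1 : Fld2)) := by
      have := eq_neg_of_add_eq_zero_left h1.symm
      push_cast at this
      exact this
    have h2 : D ((u ^ (m+1))⁻¹) = (u ^ (m+1))⁻¹ * (u ^ (m+1) * D ((u ^ (m+1))⁻¹)) := by
      rw [← mul_assoc, inv_mul_cancel₀ hw, one_mul]
    rw [key] at h2
    rw [zpow_negSucc, h2, mul_neg, mul_smul_comm, mul_one, Int.cast_negSucc, ← neg_smul]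
    congr 1
    push_cast; ring

lemma zsplit (u : Fld2) (hu : u ≠ 0) (n : ℤ) : u ^ n = u ^ (n-1) * u := by
  rw [← zpow_add_one₀ hu]; congr 1; ring

lemma key_phi (i j : ℤ) :
    (XX + YY) / (XX - YY) * (XX^i * YY^j - XX^(i-1) * YY^(j+1))
      = XX^i * YY^j + XX^(i-1) * YY^(j+1) := by
  rw [zsplit XX XX_ne i, zsplit YY YY_ne (j+1)]
  have : (j + 1 : ℤ) - 1 = j := by ring
  rw [this]
  have hxy := XY_ne
  field_simp

lemma key_psi (i : ℤ) :
    (XX + YY) / (XX - YY) * (XX^(i+1) * YY^(-1-2*i) - XX^(i-1) * YY^(1-2*i))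
      = XX^(i+1) * YY^(-1-2*i) + (2:ℂ) • (XX^i * YY^(-2*i)) + XX^(i-1) * YY^(1-2*i) := by
  have e1 : XX^(i+1) = XX^(i-1) * XX * XX := by
    rw [zsplit XX XX_ne (i+1)]
    have : (i + 1 : ℤ) - 1 = i := by ring
    rw [this, zsplit XX XX_ne i]
  have e2 : YY^(1-2*i) = YY^(-1-2*i) * YY * YY := by
    rw [zsplit YY YY_ne (1-2*i)]
    have : (1 - 2*i : ℤ) - 1 = -2*i := by ring
    rw [this, zsplit YY YY_ne (-2*i)]
    have : (-2*i : ℤ) - 1 = -1-2*i := by ring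
    rw [this]
  have e3 : XX^i = XX^(i-1) * XX := zsplit XX XX_ne i
  have e4 : YY^(-2*i) = YY^(-1-2*i) * YY := by
    rw [zsplit YY YY_ne (-2*i)]
    have : (-2*i : ℤ) - 1 = -1-2*i := by ring
    rw [this]
  rw [e1, e2, e3, e4, Algebra.smul_def, map_ofNat]
  have hxy := XY_ne
  field_simp
  ring


/-- The operators `L_1`, `L_2` act on the basis of `𝔄_{1,1}` as follows:
for `2i+j ≠ 1`, `L_1 φ_{ij} = (i+j) φ_{ij}` and `L_2 φ_{ij} = (i(i−1) − (1/2)j(j+1)) φ_{ij}`;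
and for all `i ∈ ℤ`, `L_1 ψ_i = −i ψ_i` and `L_2 ψ_i = −i² ψ_i − φ_i`. -/
theorem action_of_L1_L2_on_basis
    (Dx Dy : EndF2) (hD : IsEulerPair Dx Dy) :
    (∀ i j : ℤ, 2 * i + j ≠ 1 →
      L1op Dx Dy (phiF i j) = ((i + j : ℤ) : ℂ) • phiF i j ∧
      L2op Dx Dy (phiF i j)
        = (((i * (i - 1) : ℤ) : ℂ) - (2⁻¹ : ℂ) * ((j * (j + 1) : ℤ) : ℂ)) • phiF i j) ∧
    (∀ i : ℤ,
      L1op Dx Dy (psiF i) = (-(i : ℂ)) • psiF i ∧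
      L2op Dx Dy (psiF i) = (-(i : ℂ) ^ 2) • psiF i - phi0F i) := by

  obtain ⟨hx, hy, hxX, hxY, hyY, hyX⟩ := hD
  have hXx := D_zpow Dx hx XX XX_ne 1 (by simp [hxX])
  have hXy := D_zpow Dx hx YY YY_ne 0 (by simp [hxY])
  have hYy := D_zpow Dy hy YY YY_ne 1 (by simp [hyY])
  have hYx := D_zpow Dy hy XX XX_ne 0 (by simp [hyX])
  have hmx : ∀ a b : ℤ, Dx (XX^a * YY^b) = ((a:ℤ):ℂ) • (XX^a * YY^b) := by
    intro a b
    rw [hx, hXx, hXy]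
    simp [smul_mul_assoc]
  have hmy : ∀ a b : ℤ, Dy (XX^a * YY^b) = ((b:ℤ):ℂ) • (XX^a * YY^b) := by
    intro a b
    rw [hy, hYx, hYy]
    simp [mul_smul_comm]
  constructor
  · intro i j hij
    constructor
    · simp only [L1op, LinearMap.add_apply, phiF, map_sub, map_smul, hmx, hmy]
      match_scalars <;> (push_cast; ring)
    · have hs1 : ((2*i+j-1 : ℤ) : ℂ) ≠ 0 := by
        rw [Ne, Int.cast_eq_zero]; omega
      have hc : ((2*i+j:ℤ):ℂ)/((2*i+j-1:ℤ):ℂ) * ((2*i+j-1:ℤ):ℂ) = ((2*i+j:ℤ):ℂ) :=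
        div_mul_cancel₀ _ hs1
      have e1 : Dx (phiF i j) = ((i:ℤ):ℂ) • (XX^i * YY^j)
          - ((((2*i+j:ℤ):ℂ)/((2*i+j-1:ℤ):ℂ)) * (((i-1:ℤ):ℂ))) • (XX^(i-1) * YY^(j+1)) := by
        simp only [phiF, map_sub, map_smul, hmx, smul_smul]
      have e2 : Dy (phiF i j) = ((j:ℤ):ℂ) • (XX^i * YY^j)
          - ((((2*i+j:ℤ):ℂ)/((2*i+j-1:ℤ):ℂ)) * (((j+1:ℤ):ℂ))) • (XX^(i-1) * YY^(j+1)) := by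
        simp only [phiF, map_sub, map_smul, hmy, smul_smul]
      have harg : Dx (phiF i j) + (2⁻¹:ℂ) • Dy (phiF i j)
          = (((2*i+j:ℤ):ℂ)/2) • (XX^i * YY^j - XX^(i-1) * YY^(j+1)) := by
        rw [e1, e2]
        match_scalars
        · push_cast; ring
        · push_cast at hc ⊢
          linear_combination (-(1:ℂ)/2) * hc
      have hr : (XX+YY)/(XX-YY) * (Dx (phiF i j) + (2⁻¹:ℂ) • Dy (phiF i j))
          = (((2*i+j:ℤ):ℂ)/2) • (XX^i * YY^j + XX^(i-1) * YY^(j+1)) := by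
        rw [harg, mul_smul_comm, key_phi]
      simp only [L2op, LinearMap.sub_apply, LinearMap.comp_apply, LinearMap.smul_apply,
        LinearMap.add_apply, mulOp2, LinearMap.mulLeft_apply]
      rw [hr, e1, e2]
      simp only [map_sub, map_smul, hmx, hmy, phiF]
      match_scalars
      · push_cast; ring
      · push_cast at hc ⊢
        linear_combination ((1:ℂ)/2) * hc
  · intro i
    constructor
    · simp only [L1op, LinearMap.add_apply, psiF, map_add, hmx, hmy]
      match_scalars <;> (push_cast; ring)
    · have e1 : Dx (psiF i) = ((i+1:ℤ):ℂ) • (XX^(i+1) * YY^(-1-2*i))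
          + ((i-1:ℤ):ℂ) • (XX^(i-1) * YY^(1-2*i)) := by
        simp only [psiF, map_add, hmx]
      have e2 : Dy (psiF i) = ((-1-2*i:ℤ):ℂ) • (XX^(i+1) * YY^(-1-2*i))
          + ((1-2*i:ℤ):ℂ) • (XX^(i-1) * YY^(1-2*i)) := by
        simp only [psiF, map_add, hmy]
      have harg : Dx (psiF i) + (2⁻¹:ℂ) • Dy (psiF i)
          = (2⁻¹:ℂ) • (XX^(i+1) * YY^(-1-2*i) - XX^(i-1) * YY^(1-2*i)) := by
        rw [e1, e2]
        match_scalars <;> (push_cast; ring)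
      have hr : (XX+YY)/(XX-YY) * (Dx (psiF i) + (2⁻¹:ℂ) • Dy (psiF i))
          = (2⁻¹:ℂ) • (XX^(i+1) * YY^(-1-2*i) + (2:ℂ) • (XX^i * YY^(-2*i))
              + XX^(i-1) * YY^(1-2*i)) := by
        rw [harg, mul_smul_comm, key_psi]
      simp only [L2op, LinearMap.sub_apply, LinearMap.comp_apply, LinearMap.smul_apply,
        LinearMap.add_apply, mulOp2, LinearMap.mulLeft_apply]
      rw [hr, e1, e2]
      simp only [map_add, map_smul, hmx, hmy, psiF, phi0F]
      match_scalars <;> (push_cast; ring)
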